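/- arXiv:1612.02506 — 2 statements merged into one kernel-verified Lean document; each statement's English description precedes it below -/
import Mathlib

section
/- Sufficient decrease property: under the assumptions that E is differentiable, F convex differentiable with F - E convex, J convex differentiable, the iterates satisfy ∇J(u^{k+1}) = ∇J(u^k) - τ^k • ∇E(u^k) with τ^k > 0, and the step size condition ρ · D_J^symm(u^{k+1}, u^k) ≤ (1/τ^k) · D_J^symm(u^{k+1}, u^k) - D_F(u^{k+1}, u^k) holds for a fixed ρ > 0, then E(u^{k+1}) + ρ · D_J^symm(u^{k+1}, u^k) ≤ E(u^k) for every k. -/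
open RealInnerProductSpace

/-- Gradient inequality for a convex differentiable function:
`⟪∇G(x), y - x⟫ ≤ G(y) - G(x)`. -/
lemma grad_convex_ineq {H : Type*} [NormedAddCommGroup H] [InnerProductSpace ℝ H]
    [CompleteSpace H] {G : H → ℝ} {G' : H} (x y : H)
    (hG : HasGradientAt G G' x) (hconv : ConvexOn ℝ Set.univ G) :
    ⟪G', y - x⟫ ≤ G y - G x := by
  rcases eq_or_ne y x with rfl | hxy
  · simp
  have hc : HasDerivAt (fun t : ℝ => t • (y - x) + x) (y - x) 0 := by
    simpa using ((hasDerivAt_id (0 : ℝ)).smul_const (y - x)).add_const x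
  have hd : HasDerivAt (fun t : ℝ => G (t • (y - x) + x)) ⟪G', y - x⟫ 0 := by
    have h0 : HasFDerivAt G (InnerProductSpace.toDual ℝ H G' : H →L[ℝ] ℝ)
        ((fun t : ℝ => t • (y - x) + x) 0) := by
      simpa using hasGradientAt_iff_hasFDerivAt.mp hG
    simpa [InnerProductSpace.toDual_apply_apply, Function.comp_def] using h0.comp_hasDerivAt 0 hc
  have hφconv : ConvexOn ℝ Set.univ (fun t : ℝ => G (t • (y - x) + x)) := by
    have := hconv.comp_affineMap (AffineMap.lineMap x y : ℝ →ᵃ[ℝ] H)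
    simpa [Function.comp_def, AffineMap.lineMap_apply_module'] using this
  have hslope := hφconv.le_slope_of_hasDerivWithinAt_Ioi (Set.mem_univ 0) (Set.mem_univ 1)
    zero_lt_one hd.hasDerivWithinAt
  simpa [slope_def_field] using hslope

theorem sufficient_decrease {H : Type*} [NormedAddCommGroup H] [InnerProductSpace ℝ H]
    [CompleteSpace H] (E F J : H → ℝ) (E' F' J' : H → H)
    (hE : ∀ x, HasGradientAt E (E' x) x)
    (hF : ∀ x, HasGradientAt F (F' x) x)
    (hJ : ∀ x, HasGradientAt J (J' x) x)
    (hFconv : ConvexOn ℝ Set.univ F)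
    (hJconv : ConvexOn ℝ Set.univ J)
    (hGconv : ConvexOn ℝ Set.univ (fun u => F u - E u))
    (u : ℕ → H) (τ : ℕ → ℝ) (ρ : ℝ) (hρ : 0 < ρ)
    (hτ : ∀ k, 0 < τ k)
    (hupdate : ∀ k, J' (u (k + 1)) = J' (u k) - τ k • E' (u k))
    (hstep : ∀ k, ρ * ⟪J' (u (k + 1)) - J' (u k), u (k + 1) - u k⟫
        ≤ (1 / τ k) * ⟪J' (u (k + 1)) - J' (u k), u (k + 1) - u k⟫
          - (F (u (k + 1)) - F (u k) - ⟪F' (u k), u (k + 1) - u k⟫)) :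
    ∀ k, E (u (k + 1)) + ρ * ⟪J' (u (k + 1)) - J' (u k), u (k + 1) - u k⟫ ≤ E (u k) := by
  intro k
  set a := u k
  set b := u (k + 1)
  have hGgrad : HasGradientAt (fun v => F v - E v) (F' a - E' a) a := by
    rw [hasGradientAt_iff_hasFDerivAt]
    have := (hasGradientAt_iff_hasFDerivAt.mp (hF a)).sub
      (hasGradientAt_iff_hasFDerivAt.mp (hE a))
    rw [map_sub]; exact this
  have hG := grad_convex_ineq a b hGgrad hGconv
  rw [inner_sub_left] at hG
  -- ⟪F' a, b - a⟫ - ⟪E' a, b - a⟫ ≤ (F b - E b) - (F a - E a)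
  have hτk := hτ k
  have hinner : ⟪J' b - J' a, b - a⟫ = -(τ k * ⟪E' a, b - a⟫) := by
    rw [hupdate k]
    rw [sub_sub_cancel_left, inner_neg_left, real_inner_smul_left]
  have hEinner : ⟪E' a, b - a⟫ = -(1 / τ k) * ⟪J' b - J' a, b - a⟫ := by
    rw [hinner]
    field_simp
  have hs := hstep k
  rw [hEinner] at hG
  nlinarith [hs, hG]
end

section
/- Gradient bound: suppose J is differentiable, p^k = ∇J(u^k), the update p^{k+1} = p^k - τ^k • ∇E(u^k) holds with τ^k ≥ τ̄ > 0, and the dual strong convexity estimate δ‖p - q‖² ≤ ⟪p - q, u - v⟫ holds whenever p = ∇J(u), q = ∇J(v) (δ > 0). Then ‖∇E(u^k)‖ ≤ (1/(δ τ̄)) · ‖u^{k+1} - u^k‖ for all k. -/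
open RealInnerProductSpace

theorem gradient_bound {H : Type*} [NormedAddCommGroup H] [InnerProductSpace ℝ H]
    [CompleteSpace H] (E J : H → ℝ) (E' J' : H → H)
    (hE : ∀ x, HasGradientAt E (E' x) x)
    (hJ : ∀ x, HasGradientAt J (J' x) x)
    (δ : ℝ) (hδ : 0 < δ)
    (hdual : ∀ u v : H, δ * ‖J' u - J' v‖ ^ 2 ≤ ⟪J' u - J' v, u - v⟫)
    (u : ℕ → H) (τ : ℕ → ℝ) (τbar : ℝ) (hτbar : 0 < τbar)
    (hτ : ∀ k, τbar ≤ τ k)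
    (hupdate : ∀ k, J' (u (k + 1)) = J' (u k) - τ k • E' (u k)) :
    ∀ k, ‖E' (u k)‖ ≤ (1 / (δ * τbar)) * ‖u (k + 1) - u k‖ := by
  intro k
  have hτk : 0 < τ k := lt_of_lt_of_le hτbar (hτ k)
  have hdiff : J' (u (k + 1)) - J' (u k) = -(τ k • E' (u k)) := by
    rw [hupdate k]; abel
  have hnorm : ‖J' (u (k + 1)) - J' (u k)‖ = τ k * ‖E' (u k)‖ := by
    rw [hdiff, norm_neg, norm_smul, Real.norm_eq_abs, abs_of_pos hτk]
  -- key: δ * ‖J' diff‖ ≤ ‖u diff‖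
  have key : δ * ‖J' (u (k + 1)) - J' (u k)‖ ≤ ‖u (k + 1) - u k‖ := by
    by_cases h : J' (u (k + 1)) - J' (u k) = 0
    · rw [h, norm_zero, mul_zero]; exact norm_nonneg _
    · have hpos : 0 < ‖J' (u (k + 1)) - J' (u k)‖ := norm_pos_iff.mpr h
      have h1 := hdual (u (k + 1)) (u k)
      have h2 : ⟪J' (u (k + 1)) - J' (u k), u (k + 1) - u k⟫ ≤
          ‖J' (u (k + 1)) - J' (u k)‖ * ‖u (k + 1) - u k‖ :=
        real_inner_le_norm _ _
      have h3 : δ * ‖J' (u (k + 1)) - J' (u k)‖ ^ 2 ≤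
          ‖J' (u (k + 1)) - J' (u k)‖ * ‖u (k + 1) - u k‖ := h1.trans h2
      nlinarith
  rw [hnorm] at key
  have hδτ : 0 < δ * τbar := mul_pos hδ hτbar
  rw [div_mul_eq_mul_div, le_div_iff₀ hδτ, one_mul]
  calc ‖E' (u k)‖ * (δ * τbar) ≤ ‖E' (u k)‖ * (δ * τ k) := by
        have := hτ k
        have h0 : (0:ℝ) ≤ ‖E' (u k)‖ := norm_nonneg _
        nlinarith [mul_le_mul_of_nonneg_left this (mul_nonneg hδ.le h0)]
    _ = δ * (τ k * ‖E' (u k)‖) := by ring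
    _ ≤ ‖u (k + 1) - u k‖ := key
end
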